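/- For all T, T' ∈ gl(ν,ℝ) and K, K' ∈ u(r), the matrix commutator satisfies [ι(T,K,0,0), ι(T',K',0,0)] = ι([T,T'], [K,K'], 0, 0); in particular, (T,K) ↦ ι(T,K,0,0) is an injective Lie algebra homomorphism from the product Lie algebra gl(ν,ℝ) × u(r) into gl(2(ν+r),ℝ). -/

import Mathlib

/-!
On the Levi part `V = 0, U = 0`, the matrix `ι(T, K, 0, 0)` is the sum of two pieces supported on
complementary coordinates: the realification of `K` (entrywise `a + bi ↦ [[a, -b], [b, a]]`, which
is multiplicative) on the `r`-coordinates, and `T ⊕ (-Tᵀ)` (the standard plus dual representation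
of `gl(ν)`, a Lie algebra homomorphism) on the `ν`-coordinates. The two pieces multiply to zero in
either order, so the commutator splits into the two commutators. Injectivity holds because the
blocks of `ι(T, K, V, U)` contain `T`, `Re K`, `Im K`, `Re V`, `Im V` and `U`.
-/

open Matrix

/-- The block-matrix embedding `ι(T,K,V,U) ∈ Mat_{2(ν+r)}(ℝ)`, with row/column block
sizes `(r, ν, r, ν)`:
`[[Re K, 0, −Im K, Re Vᵀ], [Im V, T, Re V, U], [Im K, 0, Re K, −Im Vᵀ], [0,0,0,−Tᵀ]]`. -/
def iota (ν r : ℕ) (T : Matrix (Fin ν) (Fin ν) ℝ) (K : Matrix (Fin r) (Fin r) ℂ)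
    (V : Matrix (Fin ν) (Fin r) ℂ) (U : Matrix (Fin ν) (Fin ν) ℝ) :
    Matrix ((Fin r ⊕ Fin ν) ⊕ (Fin r ⊕ Fin ν)) ((Fin r ⊕ Fin ν) ⊕ (Fin r ⊕ Fin ν)) ℝ :=
  Matrix.fromBlocks
    (Matrix.fromBlocks (K.map Complex.re) 0 (V.map Complex.im) T)
    (Matrix.fromBlocks (-(K.map Complex.im)) (Vᵀ.map Complex.re) (V.map Complex.re) U)
    (Matrix.fromBlocks (K.map Complex.im) 0 0 0)
    (Matrix.fromBlocks (K.map Complex.re) (-(Vᵀ.map Complex.im)) 0 (-Tᵀ))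

/-- The Lie algebra `g̃`: the set of all matrices `ι(T,K,V,U)` with
`T ∈ gl(ν,ℝ)`, `K ∈ u(r)` (skew-Hermitian), `V ∈ Mat_{ν,r}(ℂ)`, `U ∈ Sym_ν(ℝ)`. -/
def gtilde (ν r : ℕ) :
    Set (Matrix ((Fin r ⊕ Fin ν) ⊕ (Fin r ⊕ Fin ν)) ((Fin r ⊕ Fin ν) ⊕ (Fin r ⊕ Fin ν)) ℝ) :=
  {X | ∃ T K V U, Kᴴ = -K ∧ U.IsSymm ∧ X = iota ν r T K V U}

namespace Matrix

variable {l m n : Type*}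

theorem map_re_mul [Fintype m] (A : Matrix l m ℂ) (B : Matrix m n ℂ) :
    (A * B).map Complex.re =
      A.map Complex.re * B.map Complex.re - A.map Complex.im * B.map Complex.im := by
  ext i j
  simp [mul_apply, Finset.sum_sub_distrib]

theorem map_im_mul [Fintype m] (A : Matrix l m ℂ) (B : Matrix m n ℂ) :
    (A * B).map Complex.im =
      A.map Complex.re * B.map Complex.im + A.map Complex.im * B.map Complex.re := by
  ext i j
  simp [mul_apply, Finset.sum_add_distrib]

theorem ext_re_im {A B : Matrix l n ℂ} (hre : A.map Complex.re = B.map Complex.re)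
    (him : A.map Complex.im = B.map Complex.im) : A = B :=
  ext fun i j => Complex.ext (congrFun₂ hre i j) (congrFun₂ him i j)

end Matrix

section LeviBlocks

variable {m n : Type*}

def realifyBlock (n : Type*) (K : Matrix m m ℂ) :
    Matrix ((m ⊕ n) ⊕ (m ⊕ n)) ((m ⊕ n) ⊕ (m ⊕ n)) ℝ :=
  fromBlocks (fromBlocks (K.map Complex.re) 0 0 0) (fromBlocks (-(K.map Complex.im)) 0 0 0)
    (fromBlocks (K.map Complex.im) 0 0 0) (fromBlocks (K.map Complex.re) 0 0 0)

def contragredientBlock (m : Type*) (T : Matrix n n ℝ) :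
    Matrix ((m ⊕ n) ⊕ (m ⊕ n)) ((m ⊕ n) ⊕ (m ⊕ n)) ℝ :=
  fromBlocks (fromBlocks 0 0 0 T) 0 0 (fromBlocks 0 0 0 (-Tᵀ))

theorem realifyBlock_sub (K K' : Matrix m m ℂ) :
    realifyBlock n (K - K') = realifyBlock n K - realifyBlock n K' := by
  ext ((i | i) | (i | i)) ((j | j) | (j | j)) <;> simp [realifyBlock, neg_add_eq_sub]

variable [Fintype m] [Fintype n]

theorem realifyBlock_mul (K K' : Matrix m m ℂ) :
    realifyBlock n (K * K') = realifyBlock n K * realifyBlock n K' := by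
  simp only [realifyBlock, fromBlocks_multiply, map_re_mul, map_im_mul, fromBlocks_add,
    fromBlocks_inj, Matrix.mul_zero, Matrix.zero_mul, Matrix.mul_neg, Matrix.neg_mul, add_zero,
    neg_zero, and_true, and_self]
  refine ⟨?_, ?_, ?_, ?_⟩ <;> abel

theorem contragredientBlock_commutator (T T' : Matrix n n ℝ) :
    contragredientBlock m (T * T' - T' * T) =
      contragredientBlock m T * contragredientBlock m T' -
        contragredientBlock m T' * contragredientBlock m T := by
  simp [contragredientBlock, fromBlocks_multiply, sub_eq_add_neg, fromBlocks_neg, fromBlocks_add]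

theorem realifyBlock_mul_contragredientBlock (K : Matrix m m ℂ) (T : Matrix n n ℝ) :
    realifyBlock n K * contragredientBlock m T = 0 := by
  simp [realifyBlock, contragredientBlock, fromBlocks_multiply]

theorem contragredientBlock_mul_realifyBlock (K : Matrix m m ℂ) (T : Matrix n n ℝ) :
    contragredientBlock m T * realifyBlock n K = 0 := by
  simp [realifyBlock, contragredientBlock, fromBlocks_multiply]

end LeviBlocks

theorem iota_zero_zero (ν r : ℕ) (T : Matrix (Fin ν) (Fin ν) ℝ) (K : Matrix (Fin r) (Fin r) ℂ) :
    iota ν r T K 0 0 = realifyBlock (Fin ν) K + contragredientBlock (Fin r) T := by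
  simp [iota, realifyBlock, contragredientBlock, fromBlocks_add]

theorem iota_inj {ν r : ℕ} {T T' : Matrix (Fin ν) (Fin ν) ℝ} {K K' : Matrix (Fin r) (Fin r) ℂ}
    {V V' : Matrix (Fin ν) (Fin r) ℂ} {U U' : Matrix (Fin ν) (Fin ν) ℝ} :
    iota ν r T K V U = iota ν r T' K' V' U' ↔ T = T' ∧ K = K' ∧ V = V' ∧ U = U' := by
  refine ⟨fun h => ?_, by rintro ⟨rfl, rfl, rfl, rfl⟩; rfl⟩
  simp only [iota, fromBlocks_inj] at h
  obtain ⟨⟨hKre, -, hVim, hT⟩, ⟨-, -, hVre, hU⟩, ⟨hKim, -⟩, -⟩ := h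
  exact ⟨hT, ext_re_im hKre hKim, ext_re_im hVre hVim, hU⟩

theorem iota_levi_bracket_and_injective_general (ν r : ℕ) :
    (∀ (T T' : Matrix (Fin ν) (Fin ν) ℝ) (K K' : Matrix (Fin r) (Fin r) ℂ),
      Kᴴ = -K → K'ᴴ = -K' →
      iota ν r T K 0 0 * iota ν r T' K' 0 0 - iota ν r T' K' 0 0 * iota ν r T K 0 0 =
        iota ν r (T * T' - T' * T) (K * K' - K' * K) 0 0) ∧
    (∀ (T T' : Matrix (Fin ν) (Fin ν) ℝ) (K K' : Matrix (Fin r) (Fin r) ℂ),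
      Kᴴ = -K → K'ᴴ = -K' →
      iota ν r T K 0 0 = iota ν r T' K' 0 0 → T = T' ∧ K = K') := by
  refine ⟨fun T T' K K' _ _ => ?_, fun T T' K K' _ _ h => ?_⟩
  · simp only [iota_zero_zero, realifyBlock_sub, realifyBlock_mul, contragredientBlock_commutator,
      add_mul, mul_add, realifyBlock_mul_contragredientBlock,
      contragredientBlock_mul_realifyBlock]
    abel
  · obtain ⟨hT, hK, -, -⟩ := iota_inj.mp h
    exact ⟨hT, hK⟩

/-- `[ι(T,K,0,0), ι(T',K',0,0)] = ι([T,T'],[K,K'],0,0)`, and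
`(T,K) ↦ ι(T,K,0,0)` is an injective Lie algebra homomorphism of `gl(ν,ℝ) × u(r)`
into `gl(2(ν+r),ℝ)`. -/
theorem iota_levi_bracket_and_injective (ν r : ℕ) (hν : 0 < ν) (hr : 0 < r) :
    (∀ (T T' : Matrix (Fin ν) (Fin ν) ℝ) (K K' : Matrix (Fin r) (Fin r) ℂ),
      Kᴴ = -K → K'ᴴ = -K' →
      iota ν r T K 0 0 * iota ν r T' K' 0 0 - iota ν r T' K' 0 0 * iota ν r T K 0 0 =
        iota ν r (T * T' - T' * T) (K * K' - K' * K) 0 0) ∧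
    (∀ (T T' : Matrix (Fin ν) (Fin ν) ℝ) (K K' : Matrix (Fin r) (Fin r) ℂ),
      Kᴴ = -K → K'ᴴ = -K' →
      iota ν r T K 0 0 = iota ν r T' K' 0 0 → T = T' ∧ K = K') :=
  iota_levi_bracket_and_injective_general ν r
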